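/- arXiv:1607.01127 — 4 statements merged into one kernel-verified Lean document; each statement's English description precedes it below -/
import Mathlib

section
/- Let A be an N×N primitive nonnegative matrix with Perron–Frobenius eigenvalue λ and Perron–Frobenius left eigenvector u normalized to lie on the unit simplex. Set f(i) = Σⱼ A(i,j) and M(i,j) = A(i,j)/f(i). Let (X_n)_{n≥0} be a Markov chain with transition matrix M started at a fixed state k, and let τ_k = inf{n ≥ 1 : X_n = k}. Then u_k = 1 / E_k[ Σ_{n=0}^{τ_k−1} λ^{−n} Π_{t=0}^{n−1} f(X_t) ]. -/
/-!
Put `D = λ⁻¹ A` and let `C` be `D` with its `k`-th column replaced by zero (the taboo matrix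
of `D` at `k`). On a path from `k` that has not yet returned to `k`, each step contributes
`λ⁻¹ f(i) M(i, j) = C(i, j)`: the weight `f` exactly undoes the normalisation of `M`. Hence the
expectation of `∑_{n<τ} λ⁻ⁿ ∏_{t<n} f(X_t)` is `∑ₙ ∑ⱼ (Cⁿ)ₖⱼ`.

Since `uᵀD = uᵀ`, we get `uᵀC = uᵀ - u_k e_kᵀ`, so the geometric series telescopes:
`u_k ∑_{n<m} e_kᵀ Cⁿ = uᵀ - uᵀCᵐ`. Primitivity gives `uᵀC^{m+1} ≤ c uᵀ` for some `c < 1`, so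
`uᵀCᵐ → 0`, and summing coordinates yields `u_k ∑ₙ ∑ⱼ (Cⁿ)ₖⱼ = ∑ⱼ u_j = 1`.
-/

open Finset Filter Matrix MeasureTheory Topology

section TabooMatrix

variable {ι : Type*}

def tabooMatrix [DecidableEq ι] {R : Type*} [Zero R] (A : Matrix ι ι R) (k : ι) :
    Matrix ι ι R :=
  of fun i j => if j ≠ k then A i j else 0

lemma tabooMatrix_apply_nonneg [DecidableEq ι] {A : Matrix ι ι ℝ} (hA : ∀ i j, 0 ≤ A i j)
    (k i j : ι) : 0 ≤ tabooMatrix A k i j := by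
  simp only [tabooMatrix, of_apply]
  split_ifs <;> simp [hA]

lemma tabooMatrix_apply_le [DecidableEq ι] {A : Matrix ι ι ℝ} (hA : ∀ i j, 0 ≤ A i j)
    (k i j : ι) : tabooMatrix A k i j ≤ A i j := by
  simp only [tabooMatrix, of_apply]
  split_ifs <;> simp [hA]

lemma vecMul_tabooMatrix_of_vecMul_eq [Fintype ι] [DecidableEq ι] {A : Matrix ι ι ℝ}
    {v : ι → ℝ} (hv : v ᵥ* A = v) (k : ι) :
    v ᵥ* tabooMatrix A k = v - Pi.single k (v k) := by
  ext j
  by_cases hj : j = k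
  · subst hj
    simp [tabooMatrix, vecMul, dotProduct]
  · simpa [tabooMatrix, vecMul, dotProduct, hj] using congrFun hv j

end TabooMatrix

section NonnegativeMatrices

variable {ι : Type*} [Fintype ι]

lemma vecMul_nonneg_of_nonneg {C : Matrix ι ι ℝ} {v : ι → ℝ} (hC : ∀ i j, 0 ≤ C i j)
    (hv : 0 ≤ v) : 0 ≤ v ᵥ* C :=
  fun j => sum_nonneg fun i _ => mul_nonneg (hv i) (hC i j)

lemma vecMul_le_vecMul_of_le_left {C : Matrix ι ι ℝ} {v w : ι → ℝ} (hC : ∀ i j, 0 ≤ C i j)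
    (h : v ≤ w) : v ᵥ* C ≤ w ᵥ* C :=
  fun j => sum_le_sum fun i _ => mul_le_mul_of_nonneg_right (h i) (hC i j)

lemma vecMul_le_vecMul_of_le_right {C D : Matrix ι ι ℝ} {v : ι → ℝ} (hv : 0 ≤ v)
    (h : ∀ i j, C i j ≤ D i j) : v ᵥ* C ≤ v ᵥ* D :=
  fun j => sum_le_sum fun i _ => mul_le_mul_of_nonneg_left (h i j) (hv i)

variable [DecidableEq ι]

lemma vecMul_pow_le_vecMul_pow {C D : Matrix ι ι ℝ} {v : ι → ℝ} (hv : 0 ≤ v)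
    (hC : ∀ i j, 0 ≤ C i j) (hCD : ∀ i j, C i j ≤ D i j) (n : ℕ) :
    v ᵥ* C ^ n ≤ v ᵥ* D ^ n := by
  induction n with
  | zero => rfl
  | succ n ih =>
    have hD : ∀ i j, 0 ≤ D i j := fun i j => (hC i j).trans (hCD i j)
    simp only [pow_succ, ← vecMul_vecMul]
    exact (vecMul_le_vecMul_of_le_left hC ih).trans
      (vecMul_le_vecMul_of_le_right (vecMul_nonneg_of_nonneg (pow_apply_nonneg hD n) hv) hCD)

lemma vecMul_pow_le_of_vecMul_le {C : Matrix ι ι ℝ} {u : ι → ℝ} (hC : ∀ i j, 0 ≤ C i j)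
    (hu : u ᵥ* C ≤ u) (n : ℕ) : u ᵥ* C ^ n ≤ u := by
  induction n with
  | zero => simp
  | succ n ih =>
    rw [pow_succ, ← vecMul_vecMul]
    exact (vecMul_le_vecMul_of_le_left hC ih).trans hu

lemma vecMul_pow_of_vecMul_eq {D : Matrix ι ι ℝ} {u : ι → ℝ} (hu : u ᵥ* D = u) (n : ℕ) :
    u ᵥ* D ^ n = u := by
  induction n with
  | zero => simp
  | succ n ih => rw [pow_succ, ← vecMul_vecMul, ih, hu]

lemma sum_apply_pos_of_pow_apply_pos {A : Matrix ι ι ℝ} (hA : ∀ i j, 0 ≤ A i j) {m : ℕ}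
    (hm : m ≠ 0) (hAm : ∀ i j, 0 < (A ^ m) i j) (i : ι) : 0 < ∑ j, A i j := by
  refine (sum_nonneg fun j _ => hA i j).lt_of_ne fun hsum => (hAm i i).ne' ?_
  have hrow : ∀ l, A i l = 0 := fun l =>
    (sum_eq_zero_iff_of_nonneg fun j _ => hA i j).1 hsum.symm l (mem_univ l)
  obtain ⟨m, rfl⟩ := Nat.exists_eq_succ_of_ne_zero hm
  simp [pow_succ', mul_apply, hrow]

lemma tendsto_vecMul_pow_of_le_smul {C : Matrix ι ι ℝ} {u : ι → ℝ} (hC : ∀ i j, 0 ≤ C i j)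
    (hu : 0 ≤ u) (hCu : u ᵥ* C ≤ u) {q : ℕ} (hq : q ≠ 0) {c : ℝ} (hc₀ : 0 ≤ c) (hc₁ : c < 1)
    (hcontr : u ᵥ* C ^ q ≤ c • u) :
    Tendsto (fun n => u ᵥ* C ^ n) atTop (𝓝 0) := by
  have hbound : ∀ n, u ᵥ* C ^ n ≤ c ^ (n / q) • u := by
    intro n
    induction n using Nat.strong_induction_on with
    | _ n ih =>
      rcases lt_or_ge n q with hn | hn
      · simpa [Nat.div_eq_of_lt hn] using vecMul_pow_le_of_vecMul_le hC hCu n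
      obtain ⟨r, rfl⟩ := Nat.exists_eq_add_of_le hn
      calc u ᵥ* C ^ (q + r) = (u ᵥ* C ^ q) ᵥ* C ^ r := by rw [pow_add, vecMul_vecMul]
        _ ≤ (c • u) ᵥ* C ^ r := vecMul_le_vecMul_of_le_left (pow_apply_nonneg hC r) hcontr
        _ = c • (u ᵥ* C ^ r) := smul_vecMul c u _
        _ ≤ c • (c ^ (r / q) • u) := smul_le_smul_of_nonneg_left (ih r (by omega)) hc₀
        _ = c ^ ((q + r) / q) • u := by
          rw [smul_smul, ← pow_succ', add_comm q r, Nat.add_div_right r (Nat.pos_of_ne_zero hq)]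
  have hgeom : Tendsto (fun n => c ^ (n / q)) atTop (𝓝 0) :=
    (tendsto_pow_atTop_nhds_zero_of_lt_one hc₀ hc₁).comp (Nat.tendsto_div_const_atTop hq)
  refine tendsto_pi_nhds.2 fun j => squeeze_zero
    (fun n => vecMul_nonneg_of_nonneg (pow_apply_nonneg hC n) hu j) (fun n => hbound n j) ?_
  simpa using hgeom.mul_const (u j)

end NonnegativeMatrices

lemma exists_sub_le_smul_of_pos {ι : Type*} [Finite ι] [Nonempty ι] {u d : ι → ℝ}
    (hu : ∀ j, 0 < u j) (hd : ∀ j, 0 < d j) : ∃ c : ℝ, 0 ≤ c ∧ c < 1 ∧ u - d ≤ c • u := by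
  obtain ⟨j₀, hj₀⟩ := Finite.exists_max fun j => 1 - d j / u j
  refine ⟨max 0 (1 - d j₀ / u j₀), le_max_left _ _,
    max_lt one_pos (sub_lt_self _ (div_pos (hd j₀) (hu j₀))), fun j => ?_⟩
  calc u j - d j = (1 - d j / u j) * u j := by field_simp [(hu j).ne']
    _ ≤ max 0 (1 - d j₀ / u j₀) * u j :=
      mul_le_mul_of_nonneg_right ((hj₀ j).trans (le_max_right _ _)) (hu j).le

section Renewal

variable {ι : Type*} [Fintype ι] [DecidableEq ι]

lemma sum_range_vecMul_pow {R : Type*} [Ring R] (C : Matrix ι ι R) (v : ι → R) (m : ℕ) :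
    ∑ n ∈ range m, (v - v ᵥ* C) ᵥ* C ^ n = v - v ᵥ* C ^ m := by
  have h : v - v ᵥ* C = v ᵥ* (1 - C) := by rw [vecMul_sub, vecMul_one]
  rw [h, ← vecMul_sum, vecMul_vecMul, mul_neg_geom_sum, vecMul_sub, vecMul_one]

theorem hasSum_sum_pow_apply {C : Matrix ι ι ℝ} {u : ι → ℝ} {k : ι} (hC : ∀ i j, 0 ≤ C i j)
    (hk : 0 < u k) (huC : u ᵥ* C = u - Pi.single k (u k))
    (hlim : Tendsto (fun n => u ᵥ* C ^ n) atTop (𝓝 0)) :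
    HasSum (fun n => ∑ j, (C ^ n) k j) ((∑ j, u j) / u k) := by
  have hpartial : ∀ m, ∑ n ∈ range m, ∑ j, (C ^ n) k j = (∑ j, (u - u ᵥ* C ^ m) j) / u k := by
    intro m
    rw [← sum_range_vecMul_pow, huC, sub_sub_cancel, eq_div_iff hk.ne']
    simp [Finset.sum_apply, Finset.mul_sum, Finset.sum_comm (s := range m), mul_comm]
  rw [hasSum_iff_tendsto_nat_of_nonneg fun n => sum_nonneg fun j _ => pow_apply_nonneg hC n k j]
  simp_rw [hpartial]
  have hsub : Tendsto (fun m => u - u ᵥ* C ^ m) atTop (𝓝 u) := by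
    simpa using tendsto_const_nhds.sub hlim
  exact (((continuous_finsetSum _ fun j _ => continuous_apply j).tendsto u).comp hsub).div_const _

lemma tendsto_vecMul_pow_tabooMatrix {D : Matrix ι ι ℝ} {u : ι → ℝ} (hD : ∀ i j, 0 ≤ D i j)
    (hu : ∀ i, 0 < u i) (huD : u ᵥ* D = u) {m : ℕ} (hDm : ∀ i j, 0 < (D ^ m) i j) (k : ι) :
    Tendsto (fun n => u ᵥ* tabooMatrix D k ^ n) atTop (𝓝 0) := by
  have hC := tabooMatrix_apply_nonneg hD k
  have huC := vecMul_tabooMatrix_of_vecMul_eq huD k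
  have hsingle : Pi.single k (u k) ≤ u := fun j => by
    by_cases hj : j = k
    · subst hj; simp
    · simp [hj, (hu j).le]
  have : Nonempty ι := ⟨k⟩
  obtain ⟨c, hc₀, hc₁, hc⟩ := exists_sub_le_smul_of_pos hu (d := fun j => u k * (D ^ m) k j)
    fun j => mul_pos (hu k) (hDm k j)
  refine tendsto_vecMul_pow_of_le_smul hC (fun i => (hu i).le)
    (huC ▸ sub_le_self _ (Pi.single_nonneg.2 (hu k).le)) m.succ_ne_zero hc₀ hc₁ (le_trans ?_ hc)
  -- `uᵀC = uᵀ - u_k e_kᵀ`, and `m` further steps of `D` carry the missing mass `u_k` everywhere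
  calc u ᵥ* tabooMatrix D k ^ (m + 1) = (u - Pi.single k (u k)) ᵥ* tabooMatrix D k ^ m := by
        rw [pow_succ', ← vecMul_vecMul, huC]
    _ ≤ (u - Pi.single k (u k)) ᵥ* D ^ m :=
        vecMul_pow_le_vecMul_pow (sub_nonneg.2 hsingle) hC (tabooMatrix_apply_le hD k) m
    _ = u - fun j => u k * (D ^ m) k j := by
        rw [sub_vecMul, vecMul_pow_of_vecMul_eq huD, single_vecMul]
        rfl

end Renewal

lemma sum_pi_mul_prod_eq_sum_vecMul_pow {ι R : Type*} [Fintype ι] [DecidableEq ι] [CommSemiring R]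
    (C : Matrix ι ι R) (n : ℕ) (v : ι → R) :
    ∑ p : Fin (n + 1) → ι, v (p 0) * ∏ t : Fin n, C (p t.castSucc) (p t.succ) =
      ∑ j, (v ᵥ* C ^ n) j := by
  induction n generalizing v with
  | zero => simpa using Fintype.sum_equiv (Equiv.funUnique (Fin 1) ι) _ _ fun _ => rfl
  | succ n ih =>
    rw [← (Fin.consEquiv fun _ => ι).sum_comp, Fintype.sum_prod_type, Finset.sum_comm]
    have hcons : ∀ (a : ι) (q : Fin (n + 1) → ι),
        v (Fin.consEquiv (fun _ => ι) (a, q) 0) * ∏ t : Fin (n + 1),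
          C (Fin.consEquiv (fun _ => ι) (a, q) t.castSucc)
            (Fin.consEquiv (fun _ => ι) (a, q) t.succ) =
        v a * C a (q 0) * ∏ t : Fin n, C (q t.castSucc) (q t.succ) := by
      intro a q
      simp [Fin.prod_univ_succ, mul_assoc]
    simp_rw [hcons, ← Finset.sum_mul]
    rw [pow_succ', ← vecMul_vecMul, ← ih]
    rfl

section MarkovChain

variable {ι Ω : Type*} {X : ℕ → Ω → ι}

def trajectory (X : ℕ → Ω → ι) (n : ℕ) (ω : Ω) : Fin (n + 1) → ι := fun t => X t ω

lemma prod_range_eq_prod_trajectory (W : Matrix ι ι ℝ) (n : ℕ) (ω : Ω) :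
    ∏ t ∈ range n, W (X t ω) (X (t + 1) ω) =
      ∏ t : Fin n, W (trajectory X n ω t.castSucc) (trajectory X n ω t.succ) :=
  (Fin.prod_univ_eq_prod_range (fun t => W (X t ω) (X (t + 1) ω)) n).symm

variable [MeasurableSpace Ω] {P : Measure Ω}

open Fin.NatCast in
lemma measureReal_trajectory_preimage [DecidableEq ι] {M : Matrix ι ι ℝ} {k : ι}
    (h_chain : ∀ (n : ℕ) (path : ℕ → ι), (P {ω | ∀ t ≤ n, X t ω = path t}).toReal =
      (if path 0 = k then 1 else 0) * ∏ t ∈ range n, M (path t) (path (t + 1)))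
    (n : ℕ) (p : Fin (n + 1) → ι) :
    P.real (trajectory X n ⁻¹' {p}) =
      (Pi.single k 1 : ι → ℝ) (p 0) * ∏ t : Fin n, M (p t.castSucc) (p t.succ) := by
  have hset : trajectory X n ⁻¹' {p} = {ω | ∀ t ≤ n, X t ω = p (t : Fin (n + 1))} := by
    ext ω
    simp only [Set.mem_preimage, Set.mem_singleton_iff, funext_iff, trajectory,
      Set.mem_ofPred_eq]
    constructor
    · intro h t ht
      simpa [Fin.val_cast_of_lt (Nat.lt_succ_of_le ht)] using h (t : Fin (n + 1))
    · intro h t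
      simpa using h t (Nat.lt_succ_iff.mp t.isLt)
  rw [measureReal_def, hset, h_chain n fun t => p (t : Fin (n + 1)),
    ← Fin.prod_univ_eq_prod_range]
  simp [Pi.single_apply]

variable [MeasurableSpace ι]

lemma measurable_trajectory (hX : ∀ n, Measurable (X n)) (n : ℕ) :
    Measurable (trajectory X n) :=
  measurable_pi_lambda _ fun t => hX t

variable [Fintype ι] [MeasurableSingletonClass ι] [IsFiniteMeasure P]

lemma integrable_comp_trajectory (hX : ∀ n, Measurable (X n)) (n : ℕ)
    (Ψ : (Fin (n + 1) → ι) → ℝ) : Integrable (fun ω => Ψ (trajectory X n ω)) P :=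
  Integrable.of_finite.comp_measurable (measurable_trajectory hX n)

lemma integral_comp_trajectory (hX : ∀ n, Measurable (X n)) (n : ℕ)
    (Ψ : (Fin (n + 1) → ι) → ℝ) :
    ∫ ω, Ψ (trajectory X n ω) ∂P = ∑ p, P.real (trajectory X n ⁻¹' {p}) * Ψ p := by
  rw [← integral_map (measurable_trajectory hX n).aemeasurable
    Measurable.of_discrete.aestronglyMeasurable, integral_fintype Integrable.of_finite]
  simp [map_measureReal_apply (measurable_trajectory hX n) (measurableSet_singleton _)]

lemma integrable_prod_range (hX : ∀ n, Measurable (X n)) (W : Matrix ι ι ℝ) (n : ℕ) :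
    Integrable (fun ω => ∏ t ∈ range n, W (X t ω) (X (t + 1) ω)) P := by
  simp_rw [prod_range_eq_prod_trajectory]
  exact integrable_comp_trajectory hX n fun p => ∏ t : Fin n, W (p t.castSucc) (p t.succ)

theorem integral_prod_range_eq_sum_pow_hadamard [DecidableEq ι] {M : Matrix ι ι ℝ} {k : ι}
    (hX : ∀ n, Measurable (X n))
    (h_chain : ∀ (n : ℕ) (path : ℕ → ι), (P {ω | ∀ t ≤ n, X t ω = path t}).toReal =
      (if path 0 = k then 1 else 0) * ∏ t ∈ range n, M (path t) (path (t + 1)))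
    (W : Matrix ι ι ℝ) (n : ℕ) :
    ∫ ω, ∏ t ∈ range n, W (X t ω) (X (t + 1) ω) ∂P = ∑ j, ((W ⊙ M) ^ n) k j := by
  simp_rw [prod_range_eq_prod_trajectory]
  rw [integral_comp_trajectory hX n fun p => ∏ t : Fin n, W (p t.castSucc) (p t.succ)]
  simp_rw [measureReal_trajectory_preimage h_chain, mul_assoc, ← prod_mul_distrib,
    mul_comm (M _ _), ← hadamard_apply]
  rw [sum_pi_mul_prod_eq_sum_vecMul_pow, single_one_vecMul]
  rfl

end MarkovChain

section ReturnTime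

variable {ι : Type*} {x : ℕ → ι} {k : ι}

lemma lt_sInf_iff_forall_ne (h : ∃ m, 1 ≤ m ∧ x m = k) (n : ℕ) :
    n < sInf {m | 1 ≤ m ∧ x m = k} ↔ ∀ t ∈ range n, x (t + 1) ≠ k := by
  constructor
  · intro hn t ht hxt
    have := Nat.sInf_le (show t + 1 ∈ {m | 1 ≤ m ∧ x m = k} from ⟨by omega, hxt⟩)
    rw [mem_range] at ht
    omega
  · intro hn
    by_contra! hle
    obtain ⟨h1, hk⟩ := Nat.sInf_mem (s := {m | 1 ≤ m ∧ x m = k}) h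
    obtain ⟨t, ht⟩ := Nat.exists_eq_add_of_le' h1
    exact hn t (mem_range.2 (by omega)) (ht ▸ hk)

variable [DecidableEq ι]

lemma prod_range_tabooMatrix_apply (h : ∃ m, 1 ≤ m ∧ x m = k) (W : Matrix ι ι ℝ) (n : ℕ) :
    ∏ t ∈ range n, tabooMatrix W k (x t) (x (t + 1)) =
      if n < sInf {m | 1 ≤ m ∧ x m = k} then ∏ t ∈ range n, W (x t) (x (t + 1)) else 0 := by
  simp only [tabooMatrix, of_apply, prod_ite_zero, lt_sInf_iff_forall_ne h]

lemma sum_range_sInf_eq_tsum (h : ∃ m, 1 ≤ m ∧ x m = k) (lam : ℝ) (f : ι → ℝ) :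
    ∑ n ∈ range (sInf {m | 1 ≤ m ∧ x m = k}), lam⁻¹ ^ n * ∏ t ∈ range n, f (x t) =
      ∑' n, ∏ t ∈ range n, tabooMatrix (of fun i _ => lam⁻¹ * f i) k (x t) (x (t + 1)) := by
  simp_rw [prod_range_tabooMatrix_apply h]
  rw [tsum_eq_sum (s := range _) fun n hn => if_neg (by simpa using hn)]
  refine sum_congr rfl fun n hn => ?_
  rw [if_pos (mem_range.1 hn)]
  simp [prod_mul_distrib]

end ReturnTime

/-- **Corollary.**  With the notation of the theorem, taking `i = k`:
`u k = 1 / E_k[ ∑_{n<τ} lam⁻ⁿ ∏_{t<n} f (X t) ]`. -/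
theorem perron_frobenius_eigenvector_return_time_formula
    {N : ℕ} (A : Matrix (Fin N) (Fin N) ℝ)
    (hA_nonneg : ∀ i j, 0 ≤ A i j)
    (hA_prim : ∃ m : ℕ, 0 < m ∧ ∀ i j, 0 < (A ^ m) i j)
    (lam : ℝ) (u : Fin N → ℝ)
    (hlam_pos : 0 < lam)
    (hu_pos : ∀ i, 0 < u i)
    (hu_sum : ∑ i, u i = 1)
    (hu_eig : ∀ j, ∑ i, u i * A i j = lam * u j)
    (f : Fin N → ℝ) (hf : ∀ i, f i = ∑ j, A i j)
    (M : Matrix (Fin N) (Fin N) ℝ) (hM : ∀ i j, M i j = A i j / f i)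
    (Ω : Type*) [MeasurableSpace Ω] (P : Measure Ω) [IsProbabilityMeasure P]
    (X : ℕ → Ω → Fin N) (hX_meas : ∀ n, Measurable (X n))
    (k : Fin N)
    (h_chain : ∀ (n : ℕ) (path : ℕ → Fin N),
      (P {ω | ∀ t ≤ n, X t ω = path t}).toReal =
        (if path 0 = k then 1 else 0) *
          ∏ t ∈ Finset.range n, M (path t) (path (t + 1)))
    (τ : Ω → ℕ) (hτ : ∀ ω, τ ω = sInf {n : ℕ | 1 ≤ n ∧ X n ω = k})
    (hτ_fin : ∀ᵐ ω ∂P, ∃ n : ℕ, 1 ≤ n ∧ X n ω = k) :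
    u k =
      1 / (∫ ω, ∑ n ∈ Finset.range (τ ω),
          lam⁻¹ ^ n * ∏ t ∈ Finset.range n, f (X t ω) ∂P) := by
  obtain ⟨m, hm, hAm⟩ := hA_prim
  set D : Matrix (Fin N) (Fin N) ℝ := lam⁻¹ • A
  set W : Matrix (Fin N) (Fin N) ℝ := tabooMatrix (of fun i _ => lam⁻¹ * f i) k
  have hf_pos (i : Fin N) : 0 < f i := hf i ▸ sum_apply_pos_of_pow_apply_pos hA_nonneg hm.ne' hAm i
  have hD (i j : Fin N) : 0 ≤ D i j := mul_nonneg (inv_nonneg.2 hlam_pos.le) (hA_nonneg i j)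
  have hDm (i j : Fin N) : 0 < (D ^ m) i j := by
    simpa [D, smul_pow] using mul_pos (pow_pos (inv_pos.2 hlam_pos) m) (hAm i j)
  have huD : u ᵥ* D = u := by
    rw [vecMul_smul, show u ᵥ* A = lam • u from funext hu_eig, smul_smul,
      inv_mul_cancel₀ hlam_pos.ne', one_smul]
  have hWM : W ⊙ M = tabooMatrix D k := by
    ext i j
    simp [W, D, tabooMatrix, hadamard_apply, hM, mul_assoc, mul_div_cancel₀ _ (hf_pos i).ne']
  have hseries : HasSum (fun n => ∫ ω, ∏ t ∈ range n, W (X t ω) (X (t + 1) ω) ∂P) (1 / u k) := by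
    simp_rw [integral_prod_range_eq_sum_pow_hadamard hX_meas h_chain, hWM, ← hu_sum]
    exact hasSum_sum_pow_apply (tabooMatrix_apply_nonneg hD k) (hu_pos k)
      (vecMul_tabooMatrix_of_vecMul_eq huD k) (tendsto_vecMul_pow_tabooMatrix hD hu_pos huD hDm k)
  have hW (i j : Fin N) : 0 ≤ W i j := tabooMatrix_apply_nonneg
    (fun i _ => mul_nonneg (inv_nonneg.2 hlam_pos.le) (hf_pos i).le) k i j
  have hinterchange := hasSum_integral_of_summable_integral_norm
    (fun n => integrable_prod_range (P := P) hX_meas W n)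
    (by simpa [Real.norm_of_nonneg (prod_nonneg fun _ _ => hW _ _)] using hseries.summable)
  have hae : (fun ω => ∑ n ∈ range (τ ω), lam⁻¹ ^ n * ∏ t ∈ range n, f (X t ω)) =ᵐ[P]
      fun ω => ∑' n, ∏ t ∈ range n, W (X t ω) (X (t + 1) ω) := by
    filter_upwards [hτ_fin] with ω hω
    rw [hτ ω]
    exact sum_range_sInf_eq_tsum hω lam f
  rw [integral_congr_ae hae, hinterchange.unique hseries, one_div_one_div]
end

section
/- Let A be an N×N primitive nonnegative matrix with Perron–Frobenius eigenvalue λ. Then for every state k ∈ {1,…,N}, the series Σ_{n=1}^{∞} λ^{−n} Σ_{i_1,…,i_{n−1} ≠ k} A(k,i_1)A(i_1,i_2)⋯A(i_{n−1},k) converges and its sum equals 1; here the inner sum ranges over all (n−1)-tuples of states all different from k, the n = 1 term being λ^{−1}A(k,k) and the n = 2 term being λ^{−2} Σ_{i_1 ≠ k} A(k,i_1)A(i_1,k). -/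
/-- `pathSumAvoiding A k n j = ∑_{i₁,…,iₙ ≠ k} A k i₁ * A i₁ i₂ * ⋯ * A iₙ j`,
the sum over all `n`-tuples of states different from `k` of the products of
the entries of `A` along the path `k, i₁, …, iₙ, j`.  For `n = 0` it is `A k j`. -/
def pathSumAvoiding {N : ℕ} (A : Matrix (Fin N) (Fin N) ℝ) (k : Fin N) :
    ℕ → Fin N → ℝ
  | 0 => fun j => A k j
  | n + 1 => fun j => ∑ i, if i = k then 0 else pathSumAvoiding A k n i * A i j

/-!
Put `B = λ⁻¹ A` and let `Q` be `B` with row `k` replaced by zero, so that `Qⁿ` only counts the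
paths of `Bⁿ` that never leave from `k`. The `n`-th term of the series is `(B Qⁿ)ₖₖ`, and since
`uᵀB = uᵀ` the mass `uᵀQⁿ` obeys the renewal identity `uᵀQⁿ + uₖ ∑_{m<n} (B Qᵐ)ₖ = uᵀ`: the
partial sums are `1 - (uᵀQⁿ)ₖ / uₖ`. The paths of length `m` leaving from `k` carry the mass
`uₖ (Bᵐ)ₖ`, which is a positive fraction of `uᵀ` once `Bᵐ > 0`, so `uᵀQᵐ ≤ c uᵀ` with `c < 1`.
Hence `uᵀQⁿ` decays geometrically and the partial sums tend to `1`.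
-/

open Finset Filter Topology

namespace Matrix

variable {ι R : Type*}

section UpdateRow

variable [DecidableEq ι] [Zero R] [Preorder R]

theorem updateRow_zero_apply_nonneg {B : Matrix ι ι R} (hB : ∀ i j, 0 ≤ B i j) (k i j : ι) :
    0 ≤ B.updateRow k 0 i j := by
  by_cases h : i = k <;> simp [updateRow_apply, h, hB]

theorem updateRow_zero_apply_le {B : Matrix ι ι R} (hB : ∀ i j, 0 ≤ B i j) (k i j : ι) :
    B.updateRow k 0 i j ≤ B i j := by
  by_cases h : i = k <;> simp [updateRow_apply, h, hB]

end UpdateRow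

variable [Fintype ι]

section OrderedSemiring

variable [Semiring R] [PartialOrder R] [IsOrderedRing R]

theorem vecMul_le_vecMul_of_nonneg_left {v w : ι → R} {M : Matrix ι ι R} (hvw : v ≤ w)
    (hM : ∀ i j, 0 ≤ M i j) : v ᵥ* M ≤ w ᵥ* M := fun j =>
  dotProduct_le_dotProduct_of_nonneg_right hvw fun i => hM i j

theorem vecMul_le_vecMul_of_nonneg_right {v : ι → R} {M N : Matrix ι ι R} (hv : 0 ≤ v)
    (hMN : ∀ i j, M i j ≤ N i j) : v ᵥ* M ≤ v ᵥ* N := fun j =>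
  dotProduct_le_dotProduct_of_nonneg_left (fun i => hMN i j) hv

theorem vecMul_nonneg {v : ι → R} {M : Matrix ι ι R} (hv : 0 ≤ v) (hM : ∀ i j, 0 ≤ M i j) :
    0 ≤ v ᵥ* M := fun j =>
  dotProduct_nonneg_of_nonneg hv fun i => hM i j

theorem pow_apply_le_pow_apply [DecidableEq ι] {M N : Matrix ι ι R} (hM : ∀ i j, 0 ≤ M i j)
    (hMN : ∀ i j, M i j ≤ N i j) (n : ℕ) (i j : ι) : (M ^ n) i j ≤ (N ^ n) i j := by
  induction n generalizing j with
  | zero => rfl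
  | succ n ih =>
    rw [pow_succ, pow_succ, mul_apply, mul_apply]
    exact Finset.sum_le_sum fun l _ =>
      mul_le_mul (ih l) (hMN l j) (hM l j) ((pow_apply_nonneg hM n i l).trans (ih l))

theorem vecMul_pow_le_pow_smul [DecidableEq ι] {u : ι → R} {Q : Matrix ι ι R} {a : R}
    (hQ : ∀ i j, 0 ≤ Q i j) (ha : 0 ≤ a) (h : u ᵥ* Q ≤ a • u) (n : ℕ) :
    u ᵥ* Q ^ n ≤ a ^ n • u := by
  induction n with
  | zero => simp
  | succ n ih =>
    calc u ᵥ* Q ^ (n + 1) = (u ᵥ* Q ^ n) ᵥ* Q := by rw [pow_succ, vecMul_vecMul]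
      _ ≤ (a ^ n • u) ᵥ* Q := vecMul_le_vecMul_of_nonneg_left ih hQ
      _ = a ^ n • (u ᵥ* Q) := smul_vecMul _ _ _
      _ ≤ a ^ n • (a • u) := smul_le_smul_of_nonneg_left h (pow_nonneg ha n)
      _ = a ^ (n + 1) • u := by rw [smul_smul, pow_succ]

theorem vecMul_pow_le_pow_div_smul [DecidableEq ι] {u : ι → R} {Q : Matrix ι ι R} {c : R}
    {p : ℕ} (hQ : ∀ i j, 0 ≤ Q i j) (hu : u ᵥ* Q ≤ u) (hc : 0 ≤ c) (hp : u ᵥ* Q ^ p ≤ c • u)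
    (n : ℕ) : u ᵥ* Q ^ n ≤ c ^ (n / p) • u := by
  have hmod : u ᵥ* Q ^ (n % p) ≤ u := by
    simpa using vecMul_pow_le_pow_smul hQ zero_le_one (by simpa using hu) (n % p)
  calc u ᵥ* Q ^ n = (u ᵥ* Q ^ (n % p)) ᵥ* (Q ^ p) ^ (n / p) := by
        rw [vecMul_vecMul, ← pow_mul, ← pow_add, Nat.mod_add_div]
    _ ≤ u ᵥ* (Q ^ p) ^ (n / p) :=
        vecMul_le_vecMul_of_nonneg_left hmod (pow_apply_nonneg (pow_apply_nonneg hQ p) _)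
    _ ≤ c ^ (n / p) • u := vecMul_pow_le_pow_smul (pow_apply_nonneg hQ p) hc hp _

end OrderedSemiring

theorem tendsto_vecMul_pow_nhds_zero [DecidableEq ι] {u : ι → ℝ} {Q : Matrix ι ι ℝ} {c : ℝ}
    {p : ℕ} (hu₀ : 0 ≤ u) (hQ : ∀ i j, 0 ≤ Q i j) (hu : u ᵥ* Q ≤ u) (hc₀ : 0 ≤ c) (hc₁ : c < 1)
    (hp₀ : p ≠ 0) (hp : u ᵥ* Q ^ p ≤ c • u) :
    Tendsto (fun n => u ᵥ* Q ^ n) atTop (𝓝 0) := by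
  have hgeom : Tendsto (fun n => c ^ (n / p)) atTop (𝓝 0) :=
    (tendsto_pow_atTop_nhds_zero_of_lt_one hc₀ hc₁).comp (Nat.tendsto_div_const_atTop hp₀)
  refine tendsto_pi_nhds.2 fun j => ?_
  refine squeeze_zero (fun n => vecMul_nonneg hu₀ (pow_apply_nonneg hQ n) j)
    (fun n => vecMul_pow_le_pow_div_smul hQ hu hc₀ hp n j) ?_
  simpa using hgeom.mul_const (u j)

section Taboo

variable [DecidableEq ι]

theorem update_zero_vecMul [NonUnitalNonAssocSemiring R] (u : ι → R) (M : Matrix ι ι R) (k : ι) :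
    Function.update u k 0 ᵥ* M = u ᵥ* M.updateRow k 0 := by
  ext j
  simp only [vecMul, dotProduct, Function.update_apply, updateRow_apply]
  refine Finset.sum_congr rfl fun i _ => ?_
  split_ifs <;> simp

theorem vecMul_updateRow_zero [NonUnitalNonAssocRing R] (u : ι → R) (M : Matrix ι ι R) (k : ι) :
    u ᵥ* M.updateRow k 0 = u ᵥ* M - u k • M.row k := by
  have hu : Function.update u k 0 = u - Pi.single k (u k) := by
    ext i
    by_cases h : i = k <;> simp [h]
  rw [← update_zero_vecMul, hu, sub_vecMul, single_vecMul]

theorem vecMul_updateRow_zero_pow_add_sum [Ring R] {u : ι → R} {B : Matrix ι ι R} (k : ι)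
    (hu : u ᵥ* B = u) (n : ℕ) :
    u ᵥ* B.updateRow k 0 ^ n + u k • ∑ m ∈ range n, (B * B.updateRow k 0 ^ m).row k = u := by
  induction n with
  | zero => simp
  | succ n ih =>
    rw [sum_range_succ, pow_succ', ← vecMul_vecMul, vecMul_updateRow_zero, hu, sub_vecMul,
      smul_vecMul]
    conv_rhs => rw [← ih]
    change _ + _ • (_ + B.row k ᵥ* _) = _
    rw [smul_add]
    abel

theorem sum_range_mul_updateRow_zero_pow_apply_self [Field R] {u : ι → R} {B : Matrix ι ι R}
    (k : ι) (huk : u k ≠ 0) (hu : u ᵥ* B = u) (n : ℕ) :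
    ∑ m ∈ range n, (B * B.updateRow k 0 ^ m) k k = 1 - (u ᵥ* B.updateRow k 0 ^ n) k / u k := by
  have := congrFun (vecMul_updateRow_zero_pow_add_sum k hu n) k
  simp only [Pi.add_apply, Pi.smul_apply, smul_eq_mul, Finset.sum_apply, row_apply] at this
  field_simp
  linear_combination this

section OrderedSemiring

variable [Semiring R] [PartialOrder R] [IsOrderedRing R]

theorem vecMul_updateRow_zero_le {u : ι → R} {B : Matrix ι ι R} (k : ι) (hu : 0 ≤ u)
    (hB : ∀ i j, 0 ≤ B i j) : u ᵥ* B.updateRow k 0 ≤ u ᵥ* B := by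
  rw [← update_zero_vecMul]
  exact vecMul_le_vecMul_of_nonneg_left (update_le_iff.2 ⟨hu k, fun j _ => le_rfl⟩) hB

theorem vecMul_updateRow_zero_pow_succ_le {u : ι → R} {B : Matrix ι ι R} (k : ι) (hu : 0 ≤ u)
    (hB : ∀ i j, 0 ≤ B i j) (n : ℕ) :
    u ᵥ* B.updateRow k 0 ^ (n + 1) ≤ Function.update u k 0 ᵥ* B ^ (n + 1) := by
  have hu' : 0 ≤ Function.update u k 0 := le_update_iff.2 ⟨le_rfl, fun j _ => hu j⟩
  calc u ᵥ* B.updateRow k 0 ^ (n + 1) = (Function.update u k 0 ᵥ* B) ᵥ* B.updateRow k 0 ^ n := by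
        rw [pow_succ', ← vecMul_vecMul, update_zero_vecMul]
    _ ≤ (Function.update u k 0 ᵥ* B) ᵥ* B ^ n :=
        vecMul_le_vecMul_of_nonneg_right (vecMul_nonneg hu' hB)
          (pow_apply_le_pow_apply (updateRow_zero_apply_nonneg hB k)
            (updateRow_zero_apply_le hB k) n)
    _ = Function.update u k 0 ᵥ* B ^ (n + 1) := by rw [vecMul_vecMul, ← pow_succ']

end OrderedSemiring

theorem exists_vecMul_updateRow_zero_pow_le_smul [Field R] [LinearOrder R] [IsStrictOrderedRing R]
    {u : ι → R} {B : Matrix ι ι R} (k : ι) {m : ℕ}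
    (hm : m ≠ 0) (hu : ∀ i, 0 < u i) (hB : ∀ i j, 0 ≤ B i j) (huB : u ᵥ* B = u)
    (hBm : ∀ j, 0 < (B ^ m) k j) :
    ∃ c : R, 0 ≤ c ∧ c < 1 ∧ u ᵥ* B.updateRow k 0 ^ m ≤ c • u := by
  obtain ⟨n, rfl⟩ := Nat.exists_eq_succ_of_ne_zero hm
  have huBpow : ∀ l : ℕ, u ᵥ* B ^ l = u := by
    intro l
    induction l with
    | zero => simp
    | succ l ih => rw [pow_succ, ← vecMul_vecMul, ih, huB]
  have hloss : u ᵥ* B.updateRow k 0 ^ (n + 1) ≤ u - u k • (B ^ (n + 1)).row k := by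
    calc u ᵥ* B.updateRow k 0 ^ (n + 1) ≤ Function.update u k 0 ᵥ* B ^ (n + 1) :=
          vecMul_updateRow_zero_pow_succ_le k (fun i => (hu i).le) hB n
      _ = u - u k • (B ^ (n + 1)).row k := by
          rw [update_zero_vecMul, vecMul_updateRow_zero, huBpow]
  have : Nonempty ι := ⟨k⟩
  obtain ⟨j₀, hj₀⟩ := Finite.exists_min fun j => u k * (B ^ (n + 1)) k j / u j
  set ε := u k * (B ^ (n + 1)) k j₀ / u j₀
  have hε : 0 < ε := div_pos (mul_pos (hu k) (hBm j₀)) (hu j₀)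
  have hlossε : u - u k • (B ^ (n + 1)).row k ≤ (1 - ε) • u := by
    intro j
    have := (le_div_iff₀ (hu j)).1 (hj₀ j)
    simp only [Pi.sub_apply, Pi.smul_apply, smul_eq_mul, row_apply]
    linarith
  refine ⟨1 - ε, ?_, by linarith, hloss.trans hlossε⟩
  have h₀ := (vecMul_nonneg (fun i => (hu i).le)
    (pow_apply_nonneg (updateRow_zero_apply_nonneg hB k) (n + 1))).trans (hloss.trans hlossε) j₀
  exact (mul_nonneg_iff_of_pos_right (hu j₀)).1 h₀

theorem tendsto_vecMul_updateRow_zero_pow_nhds_zero {u : ι → ℝ} {B : Matrix ι ι ℝ} (k : ι) {m : ℕ}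
    (hm : m ≠ 0) (hu : ∀ i, 0 < u i) (hB : ∀ i j, 0 ≤ B i j) (huB : u ᵥ* B = u)
    (hBm : ∀ j, 0 < (B ^ m) k j) :
    Tendsto (fun n => u ᵥ* B.updateRow k 0 ^ n) atTop (𝓝 0) := by
  obtain ⟨c, hc₀, hc₁, hc⟩ := exists_vecMul_updateRow_zero_pow_le_smul k hm hu hB huB hBm
  have hu₀ : 0 ≤ u := fun i => (hu i).le
  exact tendsto_vecMul_pow_nhds_zero hu₀ (updateRow_zero_apply_nonneg hB k)
    ((vecMul_updateRow_zero_le k hu₀ hB).trans_eq huB) hc₀ hc₁ hm hc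

end Taboo

end Matrix

theorem pathSumAvoiding_eq_mul_updateRow_pow {N : ℕ} (A : Matrix (Fin N) (Fin N) ℝ) (k : Fin N)
    (n : ℕ) (j : Fin N) : pathSumAvoiding A k n j = (A * A.updateRow k 0 ^ n) k j := by
  induction n generalizing j with
  | zero => simp [pathSumAvoiding]
  | succ n ih =>
    rw [pathSumAvoiding, pow_succ, ← mul_assoc, Matrix.mul_apply]
    refine Finset.sum_congr rfl fun i _ => ?_
    by_cases h : i = k <;> simp [Matrix.updateRow_apply, h, ih]

theorem pathSumAvoiding_smul {N : ℕ} (c : ℝ) (A : Matrix (Fin N) (Fin N) ℝ) (k : Fin N)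
    (n : ℕ) (j : Fin N) :
    pathSumAvoiding (c • A) k n j = c ^ (n + 1) * pathSumAvoiding A k n j := by
  induction n generalizing j with
  | zero => simp [pathSumAvoiding]
  | succ n ih =>
    simp only [pathSumAvoiding, ih, Finset.mul_sum, Matrix.smul_apply, smul_eq_mul]
    refine Finset.sum_congr rfl fun i _ => ?_
    split_ifs <;> ring

open Matrix in
theorem perron_frobenius_return_series_eq_one_general
    {N : ℕ} (A : Matrix (Fin N) (Fin N) ℝ)
    (hA_nonneg : ∀ i j, 0 ≤ A i j)
    (hA_prim : ∃ m : ℕ, 0 < m ∧ ∀ i j, 0 < (A ^ m) i j)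
    (lam : ℝ) (u : Fin N → ℝ)
    (hlam_pos : 0 < lam)
    (hu_pos : ∀ i, 0 < u i)
    (hu_eig : ∀ j, ∑ i, u i * A i j = lam * u j)
    (k : Fin N) :
    HasSum (fun n : ℕ => lam⁻¹ ^ (n + 1) * pathSumAvoiding A k n k) 1 := by
  obtain ⟨m, hm, hAm⟩ := hA_prim
  set B := lam⁻¹ • A
  have hB : ∀ i j, 0 ≤ B i j := fun i j => mul_nonneg (inv_nonneg.2 hlam_pos.le) (hA_nonneg i j)
  have huB : u ᵥ* B = u := by
    have huA : u ᵥ* A = lam • u := funext hu_eig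
    rw [vecMul_smul, huA, smul_smul, inv_mul_cancel₀ hlam_pos.ne', one_smul]
  have hterm (n : ℕ) :
      lam⁻¹ ^ (n + 1) * pathSumAvoiding A k n k = (B * B.updateRow k 0 ^ n) k k := by
    rw [← pathSumAvoiding_smul, pathSumAvoiding_eq_mul_updateRow_pow]
  have hBm (j : Fin N) : 0 < (B ^ m) k j := by
    simpa [B, smul_pow] using mul_pos (pow_pos (inv_pos.2 hlam_pos) m) (hAm k j)
  have hdecay := tendsto_pi_nhds.1
    (tendsto_vecMul_updateRow_zero_pow_nhds_zero k hm.ne' hu_pos hB huB hBm) k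
  refine (hasSum_iff_tendsto_nat_of_nonneg (fun n => ?_) 1).2 ?_
  · rw [hterm, mul_apply]
    exact sum_nonneg fun l _ =>
      mul_nonneg (hB k l) (pow_apply_nonneg (updateRow_zero_apply_nonneg hB k) n l k)
  · have := (hdecay.div_const (u k)).const_sub 1
    rw [Pi.zero_apply, zero_div, sub_zero] at this
    refine this.congr fun n => ?_
    rw [sum_congr rfl fun i _ => hterm i,
      sum_range_mul_updateRow_zero_pow_apply_self k (hu_pos k).ne' huB]

/-- **Lemma.**  If `A` is a primitive nonnegative matrix with Perron–Frobenius
eigenvalue `lam`, then for every state `k` the series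
`∑_{n≥1} lam⁻ⁿ ∑_{i₁,…,i_{n−1} ≠ k} A(k,i₁)A(i₁,i₂)⋯A(i_{n−1},k)`
converges to `1`.  (In the formalization the index is shifted: the term of
index `n : ℕ` is `lam⁻⁽ⁿ⁺¹⁾ ∑_{i₁,…,iₙ ≠ k} A(k,i₁)⋯A(iₙ,k)`, so the term
`n = 0` is `lam⁻¹ A(k,k)`.) -/
theorem perron_frobenius_return_series_eq_one
    {N : ℕ} (A : Matrix (Fin N) (Fin N) ℝ)
    (hA_nonneg : ∀ i j, 0 ≤ A i j)
    (hA_prim : ∃ m : ℕ, 0 < m ∧ ∀ i j, 0 < (A ^ m) i j)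
    (lam : ℝ) (u : Fin N → ℝ)
    (hlam_pos : 0 < lam)
    (hu_pos : ∀ i, 0 < u i)
    (hu_sum : ∑ i, u i = 1)
    (hu_eig : ∀ j, ∑ i, u i * A i j = lam * u j)
    (k : Fin N) :
    HasSum (fun n : ℕ => lam⁻¹ ^ (n + 1) * pathSumAvoiding A k n k) 1 :=
  perron_frobenius_return_series_eq_one_general A hA_nonneg hA_prim lam u hlam_pos hu_pos hu_eig k
end

section
/- Let A be an N×N primitive nonnegative matrix with Perron–Frobenius eigenvalue λ and Perron–Frobenius left eigenvector u normalized to lie on the unit simplex, and fix a state k. Define the vector y by y_i = 1_{{i = k}} + Σ_{n=1}^{∞} λ^{−n} Σ_{i_1,…,i_{n−1} ≠ k} A(k,i_1)A(i_1,i_2)⋯A(i_{n−1},i)·1_{{i ≠ k}}, where the inner sum ranges over all (n−1)-tuples of states all different from k. Then for every i, u_i = y_i / (Σ_{j=1}^{N} y_j); in particular u_k = 1 / (Σ_{j=1}^{N} y_j). -/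
open Matrix Finset Filter Topology

namespace PFaux

variable {N : ℕ}

/-- `A` with row `k` zeroed out. -/
def Q (A : Matrix (Fin N) (Fin N) ℝ) (k : Fin N) : Matrix (Fin N) (Fin N) ℝ :=
  fun i j => if i = k then 0 else A i j

lemma pow_nonneg {M : Matrix (Fin N) (Fin N) ℝ} (hM : ∀ i j, 0 ≤ M i j) (n : ℕ) :
    ∀ i j, 0 ≤ (M ^ n) i j := by
  induction n with
  | zero => intro i j; simp [Matrix.one_apply]; positivity
  | succ n ih =>
      intro i j
      rw [pow_succ, Matrix.mul_apply]
      exact Finset.sum_nonneg fun l _ => mul_nonneg (ih i l) (hM l j)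

lemma pow_le_pow {M M' : Matrix (Fin N) (Fin N) ℝ} (hM : ∀ i j, 0 ≤ M i j)
    (h : ∀ i j, M i j ≤ M' i j) (n : ℕ) : ∀ i j, (M ^ n) i j ≤ (M' ^ n) i j := by
  induction n with
  | zero => intro i j; simp
  | succ n ih =>
      intro i j
      rw [pow_succ, pow_succ, Matrix.mul_apply, Matrix.mul_apply]
      refine Finset.sum_le_sum fun l _ => mul_le_mul (ih i l) (h l j) (hM l j)
        ((pow_nonneg (fun a b => (hM a b).trans (h a b)) n) i l)

lemma vecMul_le_vecMul {M : Matrix (Fin N) (Fin N) ℝ} (hM : ∀ i j, 0 ≤ M i j)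
    {z z' : Fin N → ℝ} (h : ∀ i, z i ≤ z' i) : ∀ j, (z ᵥ* M) j ≤ (z' ᵥ* M) j := by
  intro j
  simp only [Matrix.vecMul, dotProduct]
  exact Finset.sum_le_sum fun i _ => mul_le_mul_of_nonneg_right (h i) (hM i j)

lemma vecMul_nonneg {M : Matrix (Fin N) (Fin N) ℝ} (hM : ∀ i j, 0 ≤ M i j)
    {z : Fin N → ℝ} (hz : ∀ i, 0 ≤ z i) : ∀ j, 0 ≤ (z ᵥ* M) j := by
  intro j
  simp only [Matrix.vecMul, dotProduct]
  exact Finset.sum_nonneg fun i _ => mul_nonneg (hz i) (hM i j)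

lemma pathSum_eq (A : Matrix (Fin N) (Fin N) ℝ) (k : Fin N) (n : ℕ) :
    pathSumAvoiding A k n = A k ᵥ* (Q A k) ^ n := by
  induction n with
  | zero => simp [pathSumAvoiding]
  | succ n ih =>
      funext j
      rw [pathSumAvoiding, pow_succ, ← Matrix.vecMul_vecMul, ← ih]
      simp only [Matrix.vecMul, dotProduct, Q]
      exact Finset.sum_congr rfl fun i _ => by split <;> simp [*]

end PFaux

/-- Let `A` be a primitive nonnegative matrix with Perron–Frobenius eigenvalue
`lam` and Perron–Frobenius eigenvector `u` on the unit simplex; fix a state `k`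
and define
`y i = 1_{i=k} + ∑_{n≥1} lam⁻ⁿ ∑_{i₁,…,i_{n−1} ≠ k} A(k,i₁)⋯A(i_{n−1},i) 1_{i≠k}`
(the term of index `n : ℕ` of the formal series below corresponds to the term
of index `n + 1` above).  Then `u i = y i / ∑ j, y j` for every `i`; in
particular `u k = 1 / ∑ j, y j`. -/
theorem perron_frobenius_eigenvector_eq_normalized_pathSum_vector
    {N : ℕ} (A : Matrix (Fin N) (Fin N) ℝ)
    (hA_nonneg : ∀ i j, 0 ≤ A i j)
    (hA_prim : ∃ m : ℕ, 0 < m ∧ ∀ i j, 0 < (A ^ m) i j)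
    (lam : ℝ) (u : Fin N → ℝ)
    (hlam_pos : 0 < lam)
    (hu_pos : ∀ i, 0 < u i)
    (hu_sum : ∑ i, u i = 1)
    (hu_eig : ∀ j, ∑ i, u i * A i j = lam * u j)
    (k : Fin N)
    (y : Fin N → ℝ)
    (hy : ∀ i, y i = (if i = k then 1 else 0) +
      ∑' n : ℕ, (if i = k then (0 : ℝ) else
        lam⁻¹ ^ (n + 1) * pathSumAvoiding A k n i)) :
    (∀ i, u i = y i / ∑ j, y j) ∧ u k = 1 / ∑ j, y j := by
  obtain ⟨m0, hm0pos, hm0⟩ := hA_prim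
  set Qm : Matrix (Fin N) (Fin N) ℝ := PFaux.Q A k with hQmdef
  have hQ_nonneg : ∀ i j, 0 ≤ Qm i j := by
    intro i j; simp only [hQmdef, PFaux.Q]; split
    · exact le_refl 0
    · exact hA_nonneg i j
  have hQ_le_A : ∀ i j, Qm i j ≤ A i j := by
    intro i j; simp only [hQmdef, PFaux.Q]; split
    · exact hA_nonneg i j
    · exact le_refl _
  set x : Fin N → ℝ := fun i => u i / u k with hxdef
  have hx_pos : ∀ i, 0 < x i := fun i => div_pos (hu_pos i) (hu_pos k)
  have hxk : x k = 1 := div_self (hu_pos k).ne'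
  -- u is a left eigenvector of all powers of A
  have huAn : ∀ n j, ∑ i, u i * (A ^ n) i j = lam ^ n * u j := by
    intro n
    induction n with
    | zero => intro j; simp [Matrix.one_apply, Finset.sum_ite_eq' Finset.univ j u]
    | succ n ih =>
        intro j
        rw [pow_succ]
        calc ∑ i, u i * (A ^ n * A) i j
            = ∑ i, ∑ l, u i * ((A ^ n) i l * A l j) := by
              refine Finset.sum_congr rfl fun i _ => ?_
              rw [Matrix.mul_apply, Finset.mul_sum]
          _ = ∑ l, (∑ i, u i * (A ^ n) i l) * A l j := by
              rw [Finset.sum_comm]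
              refine Finset.sum_congr rfl fun l _ => ?_
              rw [Finset.sum_mul]
              exact Finset.sum_congr rfl fun i _ => by ring
          _ = ∑ l, lam ^ n * (u l * A l j) := by
              refine Finset.sum_congr rfl fun l _ => ?_
              rw [ih l]; ring
          _ = lam ^ n * (lam * u j) := by rw [← Finset.mul_sum, hu_eig j]
          _ = lam ^ (n + 1) * u j := by rw [pow_succ]; ring
  have hxAn : ∀ n j, ∑ i, x i * (A ^ n) i j = lam ^ n * x j := by
    intro n j
    simp only [hxdef]
    rw [show lam ^ n * (u j / u k) = (lam ^ n * u j) / u k by ring,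
      ← huAn n j, Finset.sum_div]
    exact Finset.sum_congr rfl fun i _ => div_mul_eq_mul_div _ _ _
  -- the key one-step identity
  have hsplit : ∀ j, ∑ i, u i * A i j = u k * A k j + ∑ i, u i * Qm i j := by
    intro j
    have : ∀ i, u i * A i j =
        (if i = k then u i * A i j else 0) + u i * Qm i j := by
      intro i
      simp only [hQmdef, PFaux.Q]
      split <;> simp_all
    rw [Finset.sum_congr rfl fun i _ => this i, Finset.sum_add_distrib,
      Finset.sum_ite_eq' Finset.univ k (fun i => u i * A i j)]
    simp
  have hkey : ∀ j, lam * x j = A k j + (x ᵥ* Qm) j := by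
    intro j
    have h1 : (x ᵥ* Qm) j = (∑ i, u i * Qm i j) / u k := by
      simp only [Matrix.vecMul, dotProduct, hxdef]
      rw [Finset.sum_div]
      exact Finset.sum_congr rfl fun i _ => div_mul_eq_mul_div _ _ _
    calc lam * x j = (lam * u j) / u k := by rw [hxdef]; ring
      _ = (∑ i, u i * A i j) / u k := by rw [hu_eig]
      _ = (u k * A k j + ∑ i, u i * Qm i j) / u k := by rw [hsplit]
      _ = A k j + (x ᵥ* Qm) j := by
          rw [add_div, mul_div_cancel_left₀ _ (hu_pos k).ne', h1]
  -- the key identity pushed through powers of Qm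
  have hkeym : ∀ m j, lam * (x ᵥ* Qm ^ m) j =
      pathSumAvoiding A k m j + (x ᵥ* Qm ^ (m + 1)) j := by
    intro m j
    calc lam * (x ᵥ* Qm ^ m) j = ∑ i, (lam * x i) * (Qm ^ m) i j := by
          simp only [Matrix.vecMul, dotProduct]
          rw [Finset.mul_sum]
          exact Finset.sum_congr rfl fun i _ => (mul_assoc _ _ _).symm
      _ = ∑ i, (A k i + (x ᵥ* Qm) i) * (Qm ^ m) i j :=
          Finset.sum_congr rfl fun i _ => by rw [hkey i]
      _ = (A k ᵥ* Qm ^ m) j + ((x ᵥ* Qm) ᵥ* Qm ^ m) j := by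
          simp only [Matrix.vecMul, dotProduct, add_mul,
            Finset.sum_add_distrib]
      _ = pathSumAvoiding A k m j + (x ᵥ* Qm ^ (m + 1)) j := by
          rw [PFaux.pathSum_eq A k m, Matrix.vecMul_vecMul, ← pow_succ']
  -- telescoping
  have htel : ∀ m j, x j =
      (∑ n ∈ Finset.range m, lam⁻¹ ^ (n + 1) * pathSumAvoiding A k n j) +
        lam⁻¹ ^ m * (x ᵥ* Qm ^ m) j := by
    intro m
    induction m with
    | zero => intro j; simp [Matrix.vecMul_one]
    | succ m ih =>
        intro j
        have hstep : (x ᵥ* Qm ^ m) j =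
            lam⁻¹ * (pathSumAvoiding A k m j + (x ᵥ* Qm ^ (m + 1)) j) := by
          rw [← hkeym m j, ← mul_assoc, inv_mul_cancel₀ hlam_pos.ne', one_mul]
        rw [Finset.sum_range_succ]
        have := ih j
        rw [hstep] at this
        rw [this]
        ring
  -- nonnegativity facts
  have hp_nonneg : ∀ n j, 0 ≤ pathSumAvoiding A k n j := by
    intro n j
    rw [PFaux.pathSum_eq A k n]
    exact PFaux.vecMul_nonneg (PFaux.pow_nonneg hQ_nonneg n)
      (fun i => hA_nonneg k i) j
  have hxQ_nonneg : ∀ m j, 0 ≤ (x ᵥ* Qm ^ m) j := fun m j =>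
    PFaux.vecMul_nonneg (PFaux.pow_nonneg hQ_nonneg m)
      (fun i => (hx_pos i).le) j
  -- one-step decrease of the remainder
  have han : ∀ m j, (x ᵥ* Qm ^ (m + 1)) j ≤ lam * (x ᵥ* Qm ^ m) j := by
    intro m j
    have := hkeym m j
    have h2 := hp_nonneg m j
    linarith
  -- the submatrix power is dominated, with a positive defect, by the power of A
  have hQQ : ∀ i j, (Qm ^ (2*m0)) i j ≤
      (A ^ (2*m0)) i j - (A ^ m0) i k * (A ^ m0) k j := by
    intro i j
    have hk0 : (Qm ^ m0) k j = 0 := by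
      obtain ⟨t, rfl⟩ : ∃ t, m0 = t + 1 :=
        ⟨m0 - 1, (Nat.succ_pred_eq_of_pos hm0pos).symm⟩
      rw [pow_succ', Matrix.mul_apply]
      refine Finset.sum_eq_zero fun l _ => ?_
      simp [hQmdef, PFaux.Q]
    have e1 : (Qm ^ (2*m0)) i j = ∑ l, (Qm ^ m0) i l * (Qm ^ m0) l j := by
      rw [two_mul, pow_add, Matrix.mul_apply]
    have e2 : (A ^ (2*m0)) i j = ∑ l, (A ^ m0) i l * (A ^ m0) l j := by
      rw [two_mul, pow_add, Matrix.mul_apply]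
    rw [e1, e2,
      ← Finset.add_sum_erase Finset.univ
        (fun l => (Qm ^ m0) i l * (Qm ^ m0) l j) (Finset.mem_univ k),
      ← Finset.add_sum_erase Finset.univ
        (fun l => (A ^ m0) i l * (A ^ m0) l j) (Finset.mem_univ k),
      hk0, mul_zero, zero_add]
    have hle : ∑ l ∈ Finset.univ.erase k, (Qm ^ m0) i l * (Qm ^ m0) l j ≤
        ∑ l ∈ Finset.univ.erase k, (A ^ m0) i l * (A ^ m0) l j :=
      Finset.sum_le_sum fun l _ =>
        mul_le_mul (PFaux.pow_le_pow hQ_nonneg hQ_le_A m0 i l)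
          (PFaux.pow_le_pow hQ_nonneg hQ_le_A m0 l j)
          (PFaux.pow_nonneg hQ_nonneg m0 l j)
          (PFaux.pow_nonneg hA_nonneg m0 i l)
    linarith
  -- strict decay over a block of 2*m0 steps
  have hdecay : ∀ j, (x ᵥ* Qm ^ (2*m0)) j ≤
      lam ^ (2*m0) * x j - lam ^ m0 * (A ^ m0) k j := by
    intro j
    have h1 : (x ᵥ* Qm ^ (2*m0)) j ≤
        ∑ i, x i * ((A ^ (2*m0)) i j - (A ^ m0) i k * (A ^ m0) k j) := by
      simp only [Matrix.vecMul, dotProduct]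
      exact Finset.sum_le_sum fun i _ =>
        mul_le_mul_of_nonneg_left (hQQ i j) (hx_pos i).le
    have h2 : ∑ i, x i * ((A ^ (2*m0)) i j - (A ^ m0) i k * (A ^ m0) k j)
        = (∑ i, x i * (A ^ (2*m0)) i j)
            - (∑ i, x i * (A ^ m0) i k) * (A ^ m0) k j := by
      rw [Finset.sum_mul, ← Finset.sum_sub_distrib]
      exact Finset.sum_congr rfl fun i _ => by ring
    rw [h2, hxAn (2*m0) j, hxAn m0 k, hxk, mul_one] at h1
    exact h1
  have hNe : (Finset.univ : Finset (Fin N)).Nonempty := ⟨k, Finset.mem_univ k⟩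
  set c : ℝ := Finset.univ.sup' hNe
      (fun j => (x ᵥ* Qm ^ (2*m0)) j / (lam ^ (2*m0) * x j)) with hcdef
  have hden_pos : ∀ j : Fin N, 0 < lam ^ (2*m0) * x j := fun j =>
    mul_pos (pow_pos hlam_pos _) (hx_pos j)
  have hc_bound : ∀ j, (x ᵥ* Qm ^ (2*m0)) j ≤ c * (lam ^ (2*m0) * x j) := by
    intro j
    have hle := Finset.le_sup'
      (fun j => (x ᵥ* Qm ^ (2*m0)) j / (lam ^ (2*m0) * x j)) (Finset.mem_univ j)
    calc (x ᵥ* Qm ^ (2*m0)) j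
        = ((x ᵥ* Qm ^ (2*m0)) j / (lam ^ (2*m0) * x j)) * (lam ^ (2*m0) * x j) := by
          rw [div_mul_cancel₀ _ (hden_pos j).ne']
      _ ≤ c * (lam ^ (2*m0) * x j) :=
          mul_le_mul_of_nonneg_right hle (hden_pos j).le
  have hc_nonneg : 0 ≤ c := by
    refine le_trans (div_nonneg (hxQ_nonneg (2*m0) k) (hden_pos k).le) ?_
    exact Finset.le_sup'
      (fun j => (x ᵥ* Qm ^ (2*m0)) j / (lam ^ (2*m0) * x j)) (Finset.mem_univ k)
  have hc_lt : c < 1 := by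
    rw [hcdef, Finset.sup'_lt_iff]
    intro j _
    rw [div_lt_one (hden_pos j)]
    have h1 := hdecay j
    have hpos : 0 < lam ^ m0 * (A ^ m0) k j :=
      mul_pos (pow_pos hlam_pos _) (hm0 k j)
    linarith
  -- geometric decay along blocks
  have hiter : ∀ t j, (x ᵥ* Qm ^ (2*m0*t)) j ≤ c ^ t * (lam ^ (2*m0*t) * x j) := by
    intro t
    induction t with
    | zero => intro j; simp [Matrix.vecMul_one]
    | succ t ih =>
        intro j
        have hexp : 2*m0*(t+1) = 2*m0*t + 2*m0 := by ring
        rw [hexp, pow_add, ← Matrix.vecMul_vecMul]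
        have step1 := PFaux.vecMul_le_vecMul (M := Qm ^ (2*m0))
          (PFaux.pow_nonneg hQ_nonneg _) ih j
        have step2 : ((fun i => c ^ t * (lam ^ (2*m0*t) * x i)) ᵥ* Qm ^ (2*m0)) j
            = c ^ t * lam ^ (2*m0*t) * (x ᵥ* Qm ^ (2*m0)) j := by
          simp only [Matrix.vecMul, dotProduct]
          rw [Finset.mul_sum]
          exact Finset.sum_congr rfl fun i _ => by ring
        calc ((x ᵥ* Qm ^ (2*m0*t)) ᵥ* Qm ^ (2*m0)) j
            ≤ ((fun i => c ^ t * (lam ^ (2*m0*t) * x i)) ᵥ* Qm ^ (2*m0)) j := step1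
          _ = c ^ t * lam ^ (2*m0*t) * (x ᵥ* Qm ^ (2*m0)) j := step2
          _ ≤ c ^ t * lam ^ (2*m0*t) * (c * (lam ^ (2*m0) * x j)) :=
              mul_le_mul_of_nonneg_left (hc_bound j) (by positivity)
          _ = c ^ (t+1) * (lam ^ (2*m0*t + 2*m0) * x j) := by
              rw [pow_succ, pow_add]; ring
  -- the normalized remainder tends to zero
  have h2m : 0 < 2*m0 := by omega
  have hlim : ∀ j, Tendsto (fun n => lam⁻¹ ^ n * (x ᵥ* Qm ^ n) j) atTop (𝓝 0) := by
    intro j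
    have ha_nonneg : ∀ n, 0 ≤ lam⁻¹ ^ n * (x ᵥ* Qm ^ n) j := fun n =>
      mul_nonneg (by positivity) (hxQ_nonneg n j)
    have ha_anti : Antitone (fun n => lam⁻¹ ^ n * (x ᵥ* Qm ^ n) j) := by
      apply antitone_nat_of_succ_le
      intro n
      calc lam⁻¹ ^ (n+1) * (x ᵥ* Qm ^ (n+1)) j
          ≤ lam⁻¹ ^ (n+1) * (lam * (x ᵥ* Qm ^ n) j) :=
            mul_le_mul_of_nonneg_left (han n j) (by positivity)
        _ = lam⁻¹ ^ n * (x ᵥ* Qm ^ n) j := by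
            rw [pow_succ, mul_assoc, ← mul_assoc lam⁻¹ lam,
              inv_mul_cancel₀ hlam_pos.ne', one_mul]
    have hbound : ∀ n, lam⁻¹ ^ n * (x ᵥ* Qm ^ n) j ≤ c ^ (n / (2*m0)) * x j := by
      intro n
      have h1 : 2*m0*(n / (2*m0)) ≤ n := by
        rw [mul_comm]; exact Nat.div_mul_le_self n (2*m0)
      have h2 := ha_anti h1
      have hinv : lam⁻¹ ^ (2*m0*(n / (2*m0))) * lam ^ (2*m0*(n / (2*m0))) = 1 := by
        rw [← mul_pow, inv_mul_cancel₀ hlam_pos.ne', one_pow]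
      calc lam⁻¹ ^ n * (x ᵥ* Qm ^ n) j
          ≤ lam⁻¹ ^ (2*m0*(n / (2*m0))) * (x ᵥ* Qm ^ (2*m0*(n / (2*m0)))) j := h2
        _ ≤ lam⁻¹ ^ (2*m0*(n / (2*m0))) *
              (c ^ (n / (2*m0)) * (lam ^ (2*m0*(n / (2*m0))) * x j)) :=
            mul_le_mul_of_nonneg_left (hiter (n / (2*m0)) j) (by positivity)
        _ = c ^ (n / (2*m0)) * x j *
              (lam⁻¹ ^ (2*m0*(n / (2*m0))) * lam ^ (2*m0*(n / (2*m0)))) := by ring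
        _ = c ^ (n / (2*m0)) * x j := by rw [hinv, mul_one]
    have hdiv : Tendsto (fun n : ℕ => n / (2*m0)) atTop atTop := by
      apply tendsto_atTop_atTop.mpr
      intro b
      refine ⟨2*m0*b, fun n hn => ?_⟩
      exact (Nat.le_div_iff_mul_le h2m).mpr (by rw [mul_comm b (2*m0)]; exact hn)
    have hc0 : Tendsto (fun t : ℕ => c ^ t) atTop (𝓝 0) :=
      tendsto_pow_atTop_nhds_zero_of_lt_one hc_nonneg hc_lt
    have hub : Tendsto (fun n : ℕ => c ^ (n / (2*m0)) * x j) atTop (𝓝 0) := by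
      have := (hc0.comp hdiv).mul_const (x j)
      simpa using this
    exact squeeze_zero ha_nonneg hbound hub
  -- the value of the series
  have hseries : ∀ j, ∑' n : ℕ, lam⁻¹ ^ (n + 1) * pathSumAvoiding A k n j = x j := by
    intro j
    set s : ℕ → ℝ := fun n => lam⁻¹ ^ (n + 1) * pathSumAvoiding A k n j with hsdef
    have hs_nonneg : ∀ n, 0 ≤ s n := fun n =>
      mul_nonneg (by positivity) (hp_nonneg n j)
    have hpart : ∀ m, ∑ n ∈ Finset.range m, s n
        = x j - lam⁻¹ ^ m * (x ᵥ* Qm ^ m) j := by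
      intro m; have := htel m j; simp only [hsdef]; linarith
    have hsum_le : ∀ m, ∑ n ∈ Finset.range m, s n ≤ x j := by
      intro m
      rw [hpart]
      have : 0 ≤ lam⁻¹ ^ m * (x ᵥ* Qm ^ m) j :=
        mul_nonneg (by positivity) (hxQ_nonneg m j)
      linarith
    have hsummable : Summable s := summable_of_sum_range_le hs_nonneg hsum_le
    have htends : Tendsto (fun m => ∑ n ∈ Finset.range m, s n) atTop (𝓝 (x j)) := by
      simp only [hpart]
      simpa using tendsto_const_nhds.sub (hlim j)
    exact tendsto_nhds_unique hsummable.hasSum.tendsto_sum_nat htends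
  -- identification of y with x
  have hyx : ∀ i, y i = x i := by
    intro i
    rw [hy i]
    by_cases h : i = k
    · have hz : (fun n : ℕ => if i = k then (0:ℝ)
          else lam⁻¹ ^ (n+1) * pathSumAvoiding A k n i) = fun _ => 0 := by
        funext n; simp [h]
      rw [hz, tsum_zero, if_pos h, add_zero, h, hxk]
    · have hz : (fun n : ℕ => if i = k then (0:ℝ)
          else lam⁻¹ ^ (n+1) * pathSumAvoiding A k n i)
          = fun n => lam⁻¹ ^ (n+1) * pathSumAvoiding A k n i := by
        funext n; simp [h]
      rw [hz, if_neg h, zero_add, hseries i]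
  have hsumy : ∑ j, y j = (u k)⁻¹ := by
    simp only [hyx, hxdef]
    rw [← Finset.sum_div, hu_sum, one_div]
  constructor
  · intro i
    rw [hyx i, hsumy]
    simp only [hxdef]
    field_simp
    rw [mul_div_assoc, div_self (hu_pos k).ne', mul_one]
  · rw [hsumy, one_div, inv_inv]
end

section
/- Let A be an N×N primitive nonnegative matrix, let λ > 0 and let x be a vector with strictly positive entries satisfying xᵀA = λxᵀ. Fix a state k. Then for every integer n ≥ 1, 1 = Σ_{t=0}^{n−1} λ^{−(t+1)} Σ_{i_1,…,i_t ≠ k} A(k,i_1)A(i_1,i_2)⋯A(i_t,k) + λ^{−n} Σ_{i_1,…,i_{n−1} ≠ k} (x_{i_1}/x_k) A(i_1,i_2)⋯A(i_{n−1},k), where the sums range over tuples of states all different from k (the t = 0 term of the first sum is λ^{−1}A(k,k)). -/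
/-- `weightedPathSumAvoiding A k x n j = ∑_{i₁,…,iₙ ≠ k} x i₁ * A i₁ i₂ * ⋯ * A iₙ j`,
the sum over all `n`-tuples of states different from `k` of the entry `x i₁`
times the product of the entries of `A` along the path `i₁, …, iₙ, j`.
For `n = 0` it is `x j`. -/
def weightedPathSumAvoiding {N : ℕ} (A : Matrix (Fin N) (Fin N) ℝ) (k : Fin N)
    (x : Fin N → ℝ) : ℕ → Fin N → ℝ
  | 0 => fun j => x j
  | n + 1 => fun j =>
      ∑ i, if i = k then 0 else weightedPathSumAvoiding A k x n i * A i j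

theorem Fintype.sum_ite_eq_zero_sub {ι M : Type*} [Fintype ι] [DecidableEq ι] [AddCommGroup M]
    (f : ι → M) (k : ι) : ∑ i, (if i = k then 0 else f i) = ∑ i, f i - f k := by
  rw [← Finset.sum_erase_eq_sub (Finset.mem_univ k), ← Finset.filter_ne', Finset.sum_filter]
  simp only [ite_not]

section

variable {N : ℕ} (A : Matrix (Fin N) (Fin N) ℝ) (k : Fin N) {lam : ℝ} {x : Fin N → ℝ}

theorem weightedPathSumAvoiding_succ_of_eigenvector
    (hx_eig : ∀ j, ∑ i, x i * A i j = lam * x j) (n : ℕ) (j : Fin N) :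
    weightedPathSumAvoiding A k x (n + 1) j =
      lam * weightedPathSumAvoiding A k x n j - x k * pathSumAvoiding A k n j := by
  induction n generalizing j with
  | zero =>
    simp only [weightedPathSumAvoiding, pathSumAvoiding]
    rw [Fintype.sum_ite_eq_zero_sub, hx_eig]
  | succ n ih =>
    rw [weightedPathSumAvoiding.eq_2 A k x n, pathSumAvoiding.eq_2 A k n,
      weightedPathSumAvoiding.eq_2 A k x (n + 1), Finset.mul_sum,
      Finset.mul_sum, ← Finset.sum_sub_distrib]
    refine Finset.sum_congr rfl fun i _ => ?_
    split_ifs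
    · ring
    · rw [ih]; ring

theorem inv_pow_mul_weightedPathSumAvoiding_of_eigenvector (hlam : lam ≠ 0)
    (hx_eig : ∀ j, ∑ i, x i * A i j = lam * x j) (n : ℕ) (j : Fin N) :
    lam⁻¹ ^ n * weightedPathSumAvoiding A k x n j =
      x j - x k * ∑ t ∈ Finset.range n, lam⁻¹ ^ (t + 1) * pathSumAvoiding A k t j := by
  induction n with
  | zero => simp [weightedPathSumAvoiding]
  | succ n ih =>
    have hcancel : lam⁻¹ ^ (n + 1) * lam = lam⁻¹ ^ n := by
      rw [pow_succ, mul_assoc, inv_mul_cancel₀ hlam, mul_one]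
    rw [weightedPathSumAvoiding_succ_of_eigenvector A k hx_eig, Finset.sum_range_succ]
    linear_combination ih + weightedPathSumAvoiding A k x n j * hcancel

end

theorem iterated_eigenvector_substitution_identity_general
    {N : ℕ} (A : Matrix (Fin N) (Fin N) ℝ)
    (lam : ℝ) (hlam_pos : 0 < lam)
    (x : Fin N → ℝ) (hx_pos : ∀ i, 0 < x i)
    (hx_eig : ∀ j, ∑ i, x i * A i j = lam * x j)
    (k : Fin N) :
    ∀ n : ℕ, 1 ≤ n →
      (1 : ℝ) = (∑ t ∈ Finset.range n, lam⁻¹ ^ (t + 1) * pathSumAvoiding A k t k)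
        + lam⁻¹ ^ n * (weightedPathSumAvoiding A k x n k / x k) := by
  intro n _
  have hxk : x k ≠ 0 := (hx_pos k).ne'
  rw [← mul_div_assoc, inv_pow_mul_weightedPathSumAvoiding_of_eigenvector A k hlam_pos.ne' hx_eig,
    sub_div, mul_div_cancel_left₀ _ hxk, div_self hxk]
  ring

/-- **Iterated substitution identity.**  Let `A` be a primitive nonnegative
matrix, `lam > 0` and `x` a positive left eigenvector: `xᵀA = lam xᵀ`.  Fix a
state `k`.  Then for every `n ≥ 1`,
`1 = ∑_{t=0}^{n−1} lam⁻⁽ᵗ⁺¹⁾ ∑_{i₁,…,i_t ≠ k} A(k,i₁)⋯A(i_t,k)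
   + lam⁻ⁿ ∑_{i₁,…,iₙ ≠ k} (x i₁ / x k) A(i₁,i₂)⋯A(iₙ,k)`,
where the `t = 0` term of the first sum is `lam⁻¹ A(k,k)`, and the remainder
terms is the sum over the tuples of states different from `k` arising after
`n` substitutions of the eigenvector equation. -/
theorem iterated_eigenvector_substitution_identity
    {N : ℕ} (A : Matrix (Fin N) (Fin N) ℝ)
    (hA_nonneg : ∀ i j, 0 ≤ A i j)
    (hA_prim : ∃ m : ℕ, 0 < m ∧ ∀ i j, 0 < (A ^ m) i j)
    (lam : ℝ) (hlam_pos : 0 < lam)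
    (x : Fin N → ℝ) (hx_pos : ∀ i, 0 < x i)
    (hx_eig : ∀ j, ∑ i, x i * A i j = lam * x j)
    (k : Fin N) :
    ∀ n : ℕ, 1 ≤ n →
      (1 : ℝ) = (∑ t ∈ Finset.range n, lam⁻¹ ^ (t + 1) * pathSumAvoiding A k t k)
        + lam⁻¹ ^ n * (weightedPathSumAvoiding A k x n k / x k) :=
  iterated_eigenvector_substitution_identity_general A lam hlam_pos x hx_pos hx_eig k
end
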